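/- arXiv:1608.07495 — 6 statements merged into one kernel-verified Lean document; each statement's English description precedes it below -/
import Mathlib

section
/- For any bounded linear operator T: X → Y between Banach spaces, SS(T) ≤ 2χ(T), where SS(T) = sup over infinite-dimensional closed subspaces M of X of inf_{x ∈ S_M} ‖Tx‖, and χ(T) is the Hausdorff measure of noncompactness of T(B_X). -/
open NormedSpace Metric Set Filter
open scoped ENNReal

noncomputable section

/-- Hausdorff measure of noncompactness of a set. -/
def hchi {Y : Type*} [SeminormedAddCommGroup Y] (A : Set Y) : ℝ :=
  sInf { r : ℝ | ∃ F : Finset Y, ∀ a ∈ A, ∃ y ∈ F, dist a y ≤ r }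

variable {X Y Z : Type*} [NormedAddCommGroup X] [NormedSpace ℝ X]
  [NormedAddCommGroup Y] [NormedSpace ℝ Y]

/-- χ(T) = Hausdorff measure of noncompactness of T(B_X). -/
def chiOp (T : X →L[ℝ] Y) : ℝ := hchi (T '' closedBall 0 1)

/-- SS(T): the quantity measuring strict singularity. -/
def SS (T : X →L[ℝ] Y) : ℝ :=
  sSup { c : ℝ | ∃ M : Submodule ℝ X, IsClosed (M : Set X) ∧ ¬ FiniteDimensional ℝ M ∧
      c = sInf { r : ℝ | ∃ x ∈ M, ‖x‖ = 1 ∧ r = ‖T x‖ } }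

/-- SS_Z(T): the quantity measuring Z-strict singularity. -/
def SSZ (Z : Type*) [NormedAddCommGroup Z] [NormedSpace ℝ Z] (T : X →L[ℝ] Y) : ℝ :=
  sSup { r : ℝ | ∃ R : Z →L[ℝ] X, ∃ c : ℝ, 0 < c ∧ (∀ z, c * ‖z‖ ≤ ‖T (R z)‖) ∧ r = c / ‖R‖ }

/-- The adjoint (dual) operator T* : Y* → X*. -/
def adjOp (T : X →L[ℝ] Y) : StrongDual ℝ Y →L[ℝ] StrongDual ℝ X :=
  (ContinuousLinearMap.compL ℝ X Y ℝ).flip T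

/-- δ(S) for a (surjective) map S: the supremum of δ > 0 with δ·B ⊆ S(B). -/
def deltaQ {W : Type*} [SeminormedAddCommGroup W] (S : X → W) : ℝ :=
  sSup { d : ℝ | 0 < d ∧ ∀ w : W, ‖w‖ ≤ d → ∃ x : X, ‖x‖ ≤ 1 ∧ S x = w }

/-- SCS(T): the quantity measuring strict cosingularity. -/
def SCS (T : X →L[ℝ] Y) : ℝ :=
  sSup { r : ℝ | ∃ N : Submodule ℝ Y, IsClosed (N : Set Y) ∧ ¬ FiniteDimensional ℝ (Y ⧸ N) ∧
      Function.Surjective (fun x : X => (Submodule.Quotient.mk (T x) : Y ⧸ N)) ∧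
      r = deltaQ (fun x : X => (Submodule.Quotient.mk (T x) : Y ⧸ N)) }

/-- SCS_Z(T): the quantity measuring Z-strict cosingularity. -/
def SCSZ (Z : Type*) [NormedAddCommGroup Z] [NormedSpace ℝ Z] (T : X →L[ℝ] Y) : ℝ :=
  sSup { r : ℝ | ∃ S : Y →L[ℝ] Z, Function.Surjective (fun x : X => S (T x)) ∧
      r = deltaQ (fun x : X => S (T x)) / ‖S‖ }

/-- The annihilator M^⊥ in the continuous dual. -/
def annih (M : Submodule ℝ X) : Submodule ℝ (StrongDual ℝ X) where
  carrier := { f | ∀ x ∈ M, f x = 0 }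
  add_mem' := by intro f g hf hg x hx; simp [hf x hx, hg x hx]
  zero_mem' := by intro x _; simp
  smul_mem' := by intro c f hf x hx; simp [hf x hx]

/-- The quantity wk_Z(A) measuring weak non-compactness. -/
def wkk (Z : Type*) [NormedAddCommGroup Z] [NormedSpace ℝ Z] (A : Set Z) : ℝ :=
  sSup { r : ℝ | ∃ φ : StrongDual ℝ (StrongDual ℝ Z),
      StrongDual.toWeakDual φ ∈ closure (StrongDual.toWeakDual '' (inclusionInDoubleDual ℝ Z '' A)) ∧
      r = Metric.infDist φ (Set.range (inclusionInDoubleDual ℝ Z)) }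

/-- A Banach space is λ-subprojective. -/
def Subprojective (lam : ℝ) (Y : Type*) [NormedAddCommGroup Y] [NormedSpace ℝ Y] : Prop :=
  ∀ M : Submodule ℝ Y, IsClosed (M : Set Y) → ¬ FiniteDimensional ℝ M →
    ∃ N : Submodule ℝ Y, N ≤ M ∧ IsClosed (N : Set Y) ∧ ¬ FiniteDimensional ℝ N ∧
      ∃ P : Y →L[ℝ] Y, ‖P‖ ≤ lam ∧ LinearMap.range (P : Y →ₗ[ℝ] Y) = N ∧ ∀ y, P (P y) = P y

/-- A Banach space is λ-superprojective. -/
def Superprojective (lam : ℝ) (Y : Type*) [NormedAddCommGroup Y] [NormedSpace ℝ Y] : Prop :=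
  ∀ M : Submodule ℝ Y, IsClosed (M : Set Y) → ¬ FiniteDimensional ℝ (Y ⧸ M) →
    ∃ N : Submodule ℝ Y, M ≤ N ∧ IsClosed (N : Set Y) ∧ ¬ FiniteDimensional ℝ (Y ⧸ N) ∧
      ∃ P : Y →L[ℝ] Y, ‖P‖ ≤ lam ∧ LinearMap.range (P : Y →ₗ[ℝ] Y) = N ∧ ∀ y, P (P y) = P y

end

/-!
Take a finite `r`-net of `T(B_X)` and, by Riesz's lemma, a `1`-separated sequence `(f n)` in
`M` with `‖f n‖ ≤ R`, where `R > 1`. By pigeonhole two of the points `T (R⁻¹ • f n)` lie within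
`2r` of each other. Normalising the difference of the corresponding `f n` gives a unit vector
`x ∈ M` with `‖T x‖ ≤ 2rR`; now let `r ↓ χ(T)` and `R ↓ 1`.
-/

section HausdorffMeasure

variable {E : Type*} [SeminormedAddCommGroup E]

theorem hchi_nonneg {A : Set E} (hA : A.Nonempty) : 0 ≤ hchi A := by
  obtain ⟨a, ha⟩ := hA
  refine Real.sInf_nonneg ?_
  rintro r ⟨F, hF⟩
  obtain ⟨y, -, hy⟩ := hF a ha
  exact dist_nonneg.trans hy

theorem exists_finset_dist_le_of_hchi_lt {A : Set E} (hA : Bornology.IsBounded A) {r : ℝ}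
    (hr : hchi A < r) : ∃ F : Finset E, ∀ a ∈ A, ∃ y ∈ F, dist a y ≤ r := by
  obtain ⟨C, hC⟩ := hA.subset_closedBall 0
  have hne : { r : ℝ | ∃ F : Finset E, ∀ a ∈ A, ∃ y ∈ F, dist a y ≤ r }.Nonempty :=
    ⟨C, {0}, fun a ha => ⟨0, Finset.mem_singleton_self 0, hC ha⟩⟩
  obtain ⟨s, ⟨F, hF⟩, hs⟩ := exists_lt_of_csInf_lt hne hr
  exact ⟨F, fun a ha => (hF a ha).imp fun y hy => ⟨hy.1, hy.2.trans hs.le⟩⟩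

end HausdorffMeasure

theorem Finset.exists_ne_dist_le_two_mul_of_net {E : Type*} [PseudoMetricSpace E] {A : Set E}
    {F : Finset E} {r : ℝ} (hF : ∀ a ∈ A, ∃ y ∈ F, dist a y ≤ r) {u : ℕ → E}
    (hu : ∀ n, u n ∈ A) : ∃ m n, m ≠ n ∧ dist (u m) (u n) ≤ 2 * r := by
  choose y hyF hy using fun n => hF (u n) (hu n)
  obtain ⟨m, n, hmn, hyeq⟩ :=
    Finite.exists_ne_map_eq_of_infinite fun k => (⟨y k, hyF k⟩ : F)
  refine ⟨m, n, hmn, ?_⟩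
  calc dist (u m) (u n) ≤ dist (u m) (y m) + dist (y n) (u n) := by
        rw [show y m = y n from congrArg Subtype.val hyeq]; exact dist_triangle _ _ _
    _ ≤ r + r := add_le_add (hy m) (dist_comm (y n) (u n) ▸ hy n)
    _ = 2 * r := by ring

section Operator

variable {X Y : Type*} [NormedAddCommGroup X] [NormedSpace ℝ X]
  [NormedAddCommGroup Y] [NormedSpace ℝ Y]

theorem chiOp_nonneg (T : X →L[ℝ] Y) : 0 ≤ chiOp T :=
  hchi_nonneg ⟨T 0, mem_image_of_mem T (mem_closedBall_self zero_le_one)⟩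

theorem ContinuousLinearMap.exists_mem_norm_eq_one_norm_apply_le_of_net (T : X →L[ℝ] Y)
    {M : Submodule ℝ X} (hM : ¬ FiniteDimensional ℝ M) {F : Finset Y} {r : ℝ}
    (hF : ∀ a ∈ T '' closedBall 0 1, ∃ y ∈ F, dist a y ≤ r) {R : ℝ} (hR : 1 < R) :
    ∃ x ∈ M, ‖x‖ = 1 ∧ ‖T x‖ ≤ 2 * r * R := by
  have hR₀ : 0 < R := one_pos.trans hR
  obtain ⟨f, hfR, hfsep⟩ : ∃ f : ℕ → M, (∀ n, ‖f n‖ ≤ R) ∧ Pairwise fun m n => 1 ≤ ‖f m - f n‖ :=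
    exists_seq_norm_le_one_le_norm_sub' (c := (1 + R) / 2)
      (by rw [Real.norm_of_nonneg (by linarith)]; linarith)
      (by rw [Real.norm_of_nonneg (by linarith)]; linarith) hM
  have hball : ∀ n, R⁻¹ • (f n : X) ∈ closedBall (0 : X) 1 := fun n => by
    rw [mem_closedBall_zero_iff, norm_smul, Real.norm_of_nonneg (inv_nonneg.2 hR₀.le),
      inv_mul_le_iff₀ hR₀, mul_one]
    exact hfR n
  obtain ⟨m, n, hmn, hclose⟩ :=
    F.exists_ne_dist_le_two_mul_of_net hF fun n => mem_image_of_mem T (hball n)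
  set v : X := f m - f n
  have hvM : v ∈ M := M.sub_mem (f m).2 (f n).2
  have hv : 1 ≤ ‖v‖ := hfsep hmn
  have hTv : ‖T v‖ ≤ 2 * r * R := by
    rw [dist_eq_norm, ← map_sub, ← smul_sub, map_smul, norm_smul,
      Real.norm_of_nonneg (inv_nonneg.2 hR₀.le), inv_mul_le_iff₀ hR₀] at hclose
    linarith
  refine ⟨‖v‖⁻¹ • v, M.smul_mem _ hvM, ?_, ?_⟩
  · rw [norm_smul, norm_inv, norm_norm, inv_mul_cancel₀ (by positivity)]
  · rw [map_smul, norm_smul, norm_inv, norm_norm]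
    exact (mul_le_of_le_one_left (norm_nonneg _) (inv_le_one_of_one_le₀ hv)).trans hTv

theorem ContinuousLinearMap.exists_mem_norm_eq_one_norm_apply_le_two_mul_chiOp_add
    (T : X →L[ℝ] Y) {M : Submodule ℝ X} (hM : ¬ FiniteDimensional ℝ M) {ε : ℝ} (hε : 0 < ε) :
    ∃ x ∈ M, ‖x‖ = 1 ∧ ‖T x‖ ≤ 2 * chiOp T + ε := by
  have hχ := chiOp_nonneg T
  set r := chiOp T + ε / 4 with hr_def
  obtain ⟨F, hF⟩ := exists_finset_dist_le_of_hchi_lt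
    (T.lipschitz.isBounded_image isBounded_closedBall) (show chiOp T < r by linarith [hr_def])
  have hr : 0 < 2 * r := by positivity
  have hR : 1 < (2 * chiOp T + ε) / (2 * r) := by rw [one_lt_div hr]; linarith [hr_def]
  obtain ⟨x, hxM, hx, hTx⟩ := T.exists_mem_norm_eq_one_norm_apply_le_of_net hM hF hR
  exact ⟨x, hxM, hx, hTx.trans_eq (mul_div_cancel₀ _ hr.ne')⟩

end Operator

theorem stmt0_general {X Y : Type*} [NormedAddCommGroup X] [NormedSpace ℝ X]
    [NormedAddCommGroup Y] [NormedSpace ℝ Y] (T : X →L[ℝ] Y) :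
    SS T ≤ 2 * chiOp T := by
  refine Real.sSup_le ?_ (by linarith [chiOp_nonneg T])
  rintro c ⟨M, -, hM, rfl⟩
  have hbdd : BddBelow { r : ℝ | ∃ x ∈ M, ‖x‖ = 1 ∧ r = ‖T x‖ } :=
    ⟨0, by rintro r ⟨x, -, -, rfl⟩; exact norm_nonneg _⟩
  refine le_of_forall_pos_le_add fun ε hε => ?_
  obtain ⟨x, hxM, hx, hTx⟩ := T.exists_mem_norm_eq_one_norm_apply_le_two_mul_chiOp_add hM hε
  exact (csInf_le hbdd ⟨x, hxM, hx, rfl⟩).trans hTx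

theorem stmt0 {X Y : Type*} [NormedAddCommGroup X] [NormedSpace ℝ X] [CompleteSpace X]
    [NormedAddCommGroup Y] [NormedSpace ℝ Y] [CompleteSpace Y] (T : X →L[ℝ] Y) :
    SS T ≤ 2 * chiOp T :=
  stmt0_general T
end

section
/- If M is an infinite-dimensional closed subspace of a Banach space X, T: X → Y is a bounded operator, and c > 0 satisfies ‖Tx‖ ≥ c‖x‖ for all x ∈ M, then χ(T(B_X)) ≥ c/2. -/
open NormedSpace Metric Set Filter
open scoped ENNReal

/-
Riesz's lemma gives, for every `R > 1`, a sequence in the unit ball of `M` whose terms are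
pairwise at distance at least `1 / R`, so their images under `T` are pairwise at distance at least
`c / R`. If finitely many balls of radius `r` cover `T(B_X)`, two of these images lie in the same
ball, whence `c / R ≤ 2 r`; letting `R → 1` gives `c ≤ 2 r`.
-/

open Topology

theorem le_hchi {Y : Type*} [SeminormedAddCommGroup Y] {A : Set Y} (hA : Bornology.IsBounded A)
    {s : ℝ} (h : ∀ (r : ℝ) (F : Finset Y), (∀ a ∈ A, ∃ y ∈ F, dist a y ≤ r) → s ≤ r) :
    s ≤ hchi A := by
  refine le_csInf ?_ fun r ⟨F, hF⟩ => h r F hF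
  obtain ⟨r, hr⟩ := hA.subset_closedBall 0
  exact ⟨r, {0}, fun a ha => ⟨0, Finset.mem_singleton_self 0, hr ha⟩⟩

theorem exists_ne_dist_le_two_mul_of_cover {α ι : Type*} [PseudoMetricSpace α] [Infinite ι]
    {F : Finset α} {r : ℝ} {u : ι → α} (hu : ∀ i, ∃ y ∈ F, dist (u i) y ≤ r) :
    ∃ i j, i ≠ j ∧ dist (u i) (u j) ≤ 2 * r := by
  choose center hcenter_mem hcenter using hu
  obtain ⟨i, j, hij, hcenter_eq⟩ :=
    Finite.exists_ne_map_eq_of_infinite fun i => (⟨center i, hcenter_mem i⟩ : F)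
  have hcenter_eq : center i = center j := congrArg Subtype.val hcenter_eq
  refine ⟨i, j, hij, ?_⟩
  calc dist (u i) (u j) ≤ dist (u i) (center i) + dist (u j) (center j) := by
        rw [hcenter_eq]; exact dist_triangle_right _ _ _
    _ ≤ 2 * r := by linarith [hcenter i, hcenter j]

theorem exists_seq_norm_le_one_inv_le_norm_sub {E : Type*} [NormedAddCommGroup E]
    [NormedSpace ℝ E] (h : ¬ FiniteDimensional ℝ E) {R : ℝ} (hR : 1 < R) :
    ∃ f : ℕ → E, (∀ n, ‖f n‖ ≤ 1) ∧ Pairwise fun m n => R⁻¹ ≤ ‖f m - f n‖ := by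
  have hR₀ : 0 < R := by linarith
  have hmid : ‖((1 + R) / 2 : ℝ)‖ = (1 + R) / 2 := by
    rw [Real.norm_eq_abs, abs_of_pos (by linarith)]
  obtain ⟨g, hg_le, hg_sep⟩ := exists_seq_norm_le_one_le_norm_sub' (E := E)
    (c := (1 + R) / 2) (R := R) (by rw [hmid]; linarith) (by rw [hmid]; linarith) h
  refine ⟨fun n => R⁻¹ • g n, fun n => ?_, fun m n hmn => ?_⟩
  · rw [norm_smul, Real.norm_of_nonneg (inv_nonneg.2 hR₀.le)]
    calc R⁻¹ * ‖g n‖ ≤ R⁻¹ * R := by gcongr; exact hg_le n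
      _ = 1 := inv_mul_cancel₀ hR₀.ne'
  · show R⁻¹ ≤ ‖R⁻¹ • g m - R⁻¹ • g n‖
    rw [← smul_sub, norm_smul, Real.norm_of_nonneg (inv_nonneg.2 hR₀.le)]
    simpa using mul_le_mul_of_nonneg_left (hg_sep hmn) (inv_nonneg.2 hR₀.le)

section LowerBound

variable {X Y : Type*} [NormedAddCommGroup X] [NormedSpace ℝ X]
  [SeminormedAddCommGroup Y] [NormedSpace ℝ Y] (T : X →L[ℝ] Y) (M : Submodule ℝ X)
  {c : ℝ} {F : Finset Y} {r : ℝ}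

theorem mul_inv_le_two_mul_of_cover (hMdim : ¬ FiniteDimensional ℝ M) (hc : 0 ≤ c)
    (hT : ∀ x ∈ M, c * ‖x‖ ≤ ‖T x‖)
    (hF : ∀ a ∈ T '' closedBall 0 1, ∃ y ∈ F, dist a y ≤ r) {R : ℝ} (hR : 1 < R) :
    c * R⁻¹ ≤ 2 * r := by
  obtain ⟨f, hf_le, hf_sep⟩ := exists_seq_norm_le_one_inv_le_norm_sub hMdim hR
  obtain ⟨m, n, hmn, hdist⟩ := exists_ne_dist_le_two_mul_of_cover (u := fun n => T (f n))
    fun n => hF _ ⟨f n, mem_closedBall_zero_iff.2 (hf_le n), rfl⟩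
  calc c * R⁻¹ ≤ c * ‖(f m : X) - f n‖ := by
        gcongr; exact_mod_cast hf_sep hmn
    _ ≤ ‖T ((f m : X) - f n)‖ := hT _ (M.sub_mem (f m).2 (f n).2)
    _ ≤ 2 * r := by rwa [map_sub, ← dist_eq_norm]

theorem le_two_mul_of_cover (hMdim : ¬ FiniteDimensional ℝ M) (hc : 0 ≤ c)
    (hT : ∀ x ∈ M, c * ‖x‖ ≤ ‖T x‖)
    (hF : ∀ a ∈ T '' closedBall 0 1, ∃ y ∈ F, dist a y ≤ r) :
    c ≤ 2 * r := by
  have hlim : Tendsto (fun R : ℝ => c * R⁻¹) (𝓝[>] 1) (𝓝 c) := by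
    simpa using tendsto_const_nhds.mul
      ((tendsto_inv₀ (one_ne_zero' ℝ)).mono_left nhdsWithin_le_nhds)
  exact le_of_tendsto hlim (eventually_nhdsWithin_of_forall fun R hR =>
    mul_inv_le_two_mul_of_cover T M hMdim hc hT hF hR)

end LowerBound

theorem stmt1_general {X Y : Type*} [NormedAddCommGroup X] [NormedSpace ℝ X]
    [NormedAddCommGroup Y] [NormedSpace ℝ Y] (T : X →L[ℝ] Y)
    (M : Submodule ℝ X) (hMdim : ¬ FiniteDimensional ℝ M)
    (c : ℝ) (hc : 0 < c) (hT : ∀ x ∈ M, c * ‖x‖ ≤ ‖T x‖) :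
    c / 2 ≤ hchi (T '' closedBall 0 1) :=
  le_hchi (T.lipschitz.isBounded_image isBounded_closedBall) fun _ _ hF => by
    linarith [le_two_mul_of_cover T M hMdim hc.le hT hF]

theorem stmt1 {X Y : Type*} [NormedAddCommGroup X] [NormedSpace ℝ X] [CompleteSpace X]
    [NormedAddCommGroup Y] [NormedSpace ℝ Y] [CompleteSpace Y] (T : X →L[ℝ] Y)
    (M : Submodule ℝ X) (hMc : IsClosed (M : Set X)) (hMdim : ¬ FiniteDimensional ℝ M)
    (c : ℝ) (hc : 0 < c) (hT : ∀ x ∈ M, c * ‖x‖ ≤ ‖T x‖) :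
    c / 2 ≤ hchi (T '' closedBall 0 1) :=
  stmt1_general T M hMdim c hc hT
end

section
/- For any bounded operator T: X → c₀, SS_{c₀}(T) = SS(T), where SS_{c₀}(T) = sup{ (‖R‖·‖(TR)^{-1}‖)^{-1} : R: c₀ → X bounded linear such that TR is an isomorphism onto its range } (with sup ∅ = 0) and SS(T) = sup over infinite-dimensional closed subspaces M of X of inf_{x ∈ S_M} ‖Tx‖. -/
open NormedSpace Metric Set Filter
open scoped ENNReal

/-! If `c ‖z‖ ≤ ‖T (R z)‖` on `c₀`, then `R` maps `c₀` onto a closed infinite-dimensional subspace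
on whose unit sphere `‖T x‖ ≥ c / ‖R‖`, so `SS_{c₀}(T) ≤ SS(T)`.

Conversely, let `‖T x‖ ≥ d ‖x‖` on a closed infinite-dimensional subspace `M`. Since `T` takes
values in `c₀`, a gliding hump gives `u n ∈ M` whose images `T (u n)` are normalized and
supported, up to errors `δ n` with `∑ δ n = ε`, on consecutive blocks of coordinates. Such a
sequence satisfies `(1 - 2ε) ‖z‖ ≤ ‖∑ z n • T (u n)‖ ≤ (1 + ε) ‖z‖`, so `R z = ∑ z n • u n`
converges, has `‖R‖ ≤ (1 + ε) / d` and `(1 - 2ε) / ‖R‖ ≥ d (1 - 2ε) / (1 + ε)`; let `ε → 0`. -/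

open ZeroAtInfty Topology

theorem Submodule.exists_mem_norm_eq_one {X : Type*} [NormedAddCommGroup X] [NormedSpace ℝ X]
    {M : Submodule ℝ X} (hM : M ≠ ⊥) : ∃ x ∈ M, ‖x‖ = 1 := by
  obtain ⟨x, hxM, hx⟩ := Submodule.exists_mem_ne_zero_of_ne_bot hM
  exact ⟨‖x‖⁻¹ • x, M.smul_mem _ hxM, norm_smul_inv_norm hx⟩

theorem Submodule.ne_bot_of_not_finiteDimensional {X : Type*} [AddCommGroup X] [Module ℝ X]
    {M : Submodule ℝ X} (hM : ¬ FiniteDimensional ℝ M) : M ≠ ⊥ := by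
  rintro rfl
  exact hM inferInstance

theorem Submodule.exists_mem_ne_zero_forall_eq_zero {X : Type*} [AddCommGroup X] [Module ℝ X]
    {M : Submodule ℝ X} (hM : ¬ FiniteDimensional ℝ M) {m : ℕ} (f : Fin m → X →ₗ[ℝ] ℝ) :
    ∃ x ∈ M, x ≠ 0 ∧ ∀ j, f j x = 0 := by
  set Φ : M →ₗ[ℝ] (Fin m → ℝ) := LinearMap.pi fun j => (f j).comp M.subtype
  have hker : LinearMap.ker Φ ≠ ⊥ := fun h =>
    hM (Module.Finite.of_injective Φ (LinearMap.ker_eq_bot.mp h))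
  obtain ⟨x, hx, hx0⟩ := Submodule.exists_mem_ne_zero_of_ne_bot hker
  exact ⟨x, x.2, by simpa using hx0, fun j => congrFun (LinearMap.mem_ker.mp hx) j⟩

theorem summable_of_summable_map_of_mul_norm_le {X Y : Type*} [NormedAddCommGroup X]
    [NormedSpace ℝ X] [CompleteSpace X] [NormedAddCommGroup Y] [NormedSpace ℝ Y]
    (T : X →L[ℝ] Y) {M : Submodule ℝ X} {d : ℝ} (hd : 0 < d)
    (hdM : ∀ x ∈ M, d * ‖x‖ ≤ ‖T x‖) {u : ℕ → X} (hu : ∀ n, u n ∈ M)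
    (hTu : Summable fun n => T (u n)) : Summable u := by
  have hTu' := cauchySeq_finset_iff_vanishing_norm.mp hTu.hasSum.cauchySeq
  rw [summable_iff_vanishing_norm]
  intro γ hγ
  obtain ⟨s, hs⟩ := hTu' (d * γ) (mul_pos hd hγ)
  refine ⟨s, fun t ht => ?_⟩
  have h := hdM _ (Submodule.sum_mem M (t := t) fun n _ => hu n)
  rw [map_sum] at h
  nlinarith [hs t ht]

section MinModulus

variable {X Y : Type*} [NormedAddCommGroup X] [NormedSpace ℝ X] [NormedAddCommGroup Y]
  [NormedSpace ℝ Y]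

/-- The inner infimum in the definition of `SS T`. -/
noncomputable def minModulusOn (T : X →L[ℝ] Y) (M : Submodule ℝ X) : ℝ :=
  sInf { r : ℝ | ∃ x ∈ M, ‖x‖ = 1 ∧ r = ‖T x‖ }

theorem minModulusOn_nonneg (T : X →L[ℝ] Y) (M : Submodule ℝ X) : 0 ≤ minModulusOn T M :=
  Real.sInf_nonneg (by rintro _ ⟨x, -, -, rfl⟩; exact norm_nonneg _)

theorem minModulusOn_le (T : X →L[ℝ] Y) {M : Submodule ℝ X} {x : X} (hx : x ∈ M)
    (hx1 : ‖x‖ = 1) : minModulusOn T M ≤ ‖T x‖ :=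
  csInf_le ⟨0, by rintro _ ⟨x, -, -, rfl⟩; exact norm_nonneg _⟩ ⟨x, hx, hx1, rfl⟩

theorem minModulusOn_mul_norm_le (T : X →L[ℝ] Y) {M : Submodule ℝ X} {x : X} (hx : x ∈ M) :
    minModulusOn T M * ‖x‖ ≤ ‖T x‖ := by
  rcases eq_or_ne x 0 with rfl | hx0
  · simp
  have h := minModulusOn_le T (M.smul_mem ‖x‖⁻¹ hx) (norm_smul_inv_norm hx0)
  rwa [map_smul, norm_smul, norm_inv, norm_norm, ← div_eq_inv_mul,
    le_div_iff₀ (norm_pos_iff.mpr hx0)] at h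

theorem le_minModulusOn (T : X →L[ℝ] Y) {M : Submodule ℝ X} (hM : M ≠ ⊥) {c : ℝ}
    (hc : ∀ x ∈ M, ‖x‖ = 1 → c ≤ ‖T x‖) : c ≤ minModulusOn T M := by
  obtain ⟨x, hxM, hx1⟩ := Submodule.exists_mem_norm_eq_one hM
  exact le_csInf ⟨_, x, hxM, hx1, rfl⟩ (by rintro _ ⟨x, hxM, hx1, rfl⟩; exact hc x hxM hx1)

theorem minModulusOn_le_opNorm (T : X →L[ℝ] Y) {M : Submodule ℝ X} (hM : M ≠ ⊥) :
    minModulusOn T M ≤ ‖T‖ := by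
  obtain ⟨x, hxM, hx1⟩ := Submodule.exists_mem_norm_eq_one hM
  simpa [hx1] using (minModulusOn_le T hxM hx1).trans (T.le_opNorm x)

end MinModulus

namespace ZeroAtInftyContinuousMap

theorem norm_apply_le_norm {α β : Type*} [TopologicalSpace α] [SeminormedAddCommGroup β]
    (f : C₀(α, β)) (x : α) : ‖f x‖ ≤ ‖f‖ :=
  f.toBCF.norm_coe_le_norm x

theorem norm_le_of_forall_norm_apply_le {α β : Type*} [TopologicalSpace α]
    [SeminormedAddCommGroup β] (f : C₀(α, β)) {C : ℝ} (hC : 0 ≤ C) (h : ∀ x, ‖f x‖ ≤ C) :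
    ‖f‖ ≤ C :=
  (BoundedContinuousFunction.norm_le hC).mpr h

theorem exists_lt_norm_apply {α β : Type*} [TopologicalSpace α] [Nonempty α]
    [SeminormedAddCommGroup β] (f : C₀(α, β)) {r : ℝ} (hr : r < ‖f‖) : ∃ x, r < ‖f x‖ := by
  by_contra! h
  exact hr.not_ge (BoundedContinuousFunction.norm_le_of_nonempty.mpr h)

theorem tendsto_atTop_zero {β : Type*} [TopologicalSpace β] [Zero β] (f : C₀(ℕ, β)) :
    Tendsto f atTop (𝓝 0) :=
  cocompact_eq_atTop (α := ℕ) ▸ zero_at_infty f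

noncomputable def evalCLM (i : ℕ) : C₀(ℕ, ℝ) →L[ℝ] ℝ :=
  LinearMap.mkContinuous
    { toFun := fun f => f i
      map_add' := fun _ _ => rfl
      map_smul' := fun _ _ => rfl } 1
    (fun f => by simpa using f.norm_apply_le_norm i)

@[simp]
theorem evalCLM_apply (i : ℕ) (f : C₀(ℕ, ℝ)) : evalCLM i f = f i := rfl

noncomputable def single (n : ℕ) : C₀(ℕ, ℝ) where
  toFun := Pi.single n 1
  continuous_toFun := continuous_of_discreteTopology
  zero_at_infty' := by
    rw [cocompact_eq_atTop]
    refine tendsto_const_nhds.congr' ?_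
    filter_upwards [eventually_gt_atTop n] with i hi
    simp [hi.ne']

theorem linearIndependent_single : LinearIndependent ℝ single :=
  .of_comp (LinearMap.pi fun i => (evalCLM i : C₀(ℕ, ℝ) →ₗ[ℝ] ℝ))
    (Pi.linearIndependent_single_one ℕ ℝ)

theorem not_finiteDimensional : ¬ FiniteDimensional ℝ C₀(ℕ, ℝ) :=
  fun _ => Module.Finite.not_linearIndependent_of_infinite single linearIndependent_single

instance nontrivial : Nontrivial C₀(ℕ, ℝ) :=
  ⟨⟨single 0, 0, linearIndependent_single.ne_zero 0⟩⟩

/-- A perturbation of a disjointly supported sequence, with error `δ n` in the `n`-th term. -/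
def IsAlmostDisjoint (y : ℕ → C₀(ℕ, ℝ)) (δ : ℕ → ℝ) : Prop :=
  ∀ i, ∃ n₀, ∀ n ≠ n₀, ‖y n i‖ ≤ δ n

section AlmostDisjoint

variable {y : ℕ → C₀(ℕ, ℝ)} {δ : ℕ → ℝ} {ε : ℝ}

theorem norm_apply_sub_le_of_forall_ne (hδ0 : ∀ n, 0 ≤ δ n) (hδ : HasSum δ ε) {a : ℕ → ℝ}
    {C : ℝ} (ha : ∀ n, ‖a n‖ ≤ C) {w : C₀(ℕ, ℝ)} (hw : HasSum (fun n => a n • y n) w)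
    {i n₀ : ℕ} (hn₀ : ∀ n ≠ n₀, ‖y n i‖ ≤ δ n) : ‖w i - a n₀ * y n₀ i‖ ≤ C * ε := by
  classical
  have hC : 0 ≤ C := (norm_nonneg _).trans (ha 0)
  have hwi : HasSum (fun n => a n * y n i) (w i) := by simpa using hw.mapL (evalCLM i)
  have hrest := hwi.update n₀ 0
  rw [zero_sub, neg_add_eq_sub] at hrest
  refine hrest.norm_le_of_bounded (hδ.mul_left C) fun n => ?_
  rcases eq_or_ne n n₀ with rfl | hn
  · simpa using mul_nonneg hC (hδ0 n)
  · rw [Function.update_of_ne hn, norm_mul]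
    exact mul_le_mul (ha n) (hn₀ n hn) (norm_nonneg _) hC

theorem IsAlmostDisjoint.norm_le_of_hasSum (hy : IsAlmostDisjoint y δ) (hy1 : ∀ n, ‖y n‖ ≤ 1)
    (hδ0 : ∀ n, 0 ≤ δ n) (hδ : HasSum δ ε) {a : ℕ → ℝ} {C : ℝ} (ha : ∀ n, ‖a n‖ ≤ C)
    {w : C₀(ℕ, ℝ)} (hw : HasSum (fun n => a n • y n) w) : ‖w‖ ≤ C * (1 + ε) := by
  have hC : 0 ≤ C := (norm_nonneg _).trans (ha 0)
  have hε : 0 ≤ ε := hδ.nonneg hδ0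
  refine norm_le_of_forall_norm_apply_le w (by positivity) fun i => ?_
  obtain ⟨n₀, hn₀⟩ := hy i
  have hdom : ‖a n₀ * y n₀ i‖ ≤ C := by
    rw [norm_mul]
    exact (mul_le_mul (ha n₀) ((norm_apply_le_norm _ i).trans (hy1 n₀)) (norm_nonneg _) hC).trans_eq
      (mul_one C)
  have hrest := norm_apply_sub_le_of_forall_ne hδ0 hδ ha hw hn₀
  linarith [norm_le_norm_add_norm_sub' (w i) (a n₀ * y n₀ i)]

theorem IsAlmostDisjoint.summable (hy : IsAlmostDisjoint y δ) (hy1 : ∀ n, ‖y n‖ ≤ 1)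
    (hδ0 : ∀ n, 0 ≤ δ n) (hδ : HasSum δ ε) (a : C₀(ℕ, ℝ)) : Summable fun n => a n • y n := by
  classical
  have hε : 0 ≤ ε := hδ.nonneg hδ0
  rw [summable_iff_vanishing_norm]
  intro γ hγ
  set η := γ / (2 * (1 + ε))
  obtain ⟨N, hN⟩ := eventually_atTop.mp
    ((tendsto_atTop_zero a).eventually (closedBall_mem_nhds 0 (by positivity : 0 < η)))
  refine ⟨Finset.range N, fun t ht => ?_⟩
  have hsum : HasSum (fun n => (if n ∈ t then a n else 0) • y n) (∑ n ∈ t, a n • y n) := by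
    have h : HasSum (fun n => (if n ∈ t then a n else 0) • y n)
        (∑ n ∈ t, (if n ∈ t then a n else 0) • y n) :=
      hasSum_sum_of_ne_finset_zero fun n hn => by simp [hn]
    rwa [Finset.sum_congr rfl fun n hn => by rw [if_pos hn]] at h
  have hcoef : ∀ n, ‖if n ∈ t then a n else 0‖ ≤ η := fun n => by
    split_ifs with hn
    · simpa using hN n (by simpa using Finset.disjoint_left.mp ht hn)
    · simp [show 0 ≤ η by positivity]
  calc ‖∑ n ∈ t, a n • y n‖ ≤ η * (1 + ε) := hy.norm_le_of_hasSum hy1 hδ0 hδ hcoef hsum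
    _ < γ := by
      rw [div_mul_eq_mul_div, mul_div_mul_right γ 2 (by positivity)]
      exact half_lt_self hγ

theorem IsAlmostDisjoint.le_norm_of_hasSum (hy : IsAlmostDisjoint y δ) (hy1 : ∀ n, ‖y n‖ = 1)
    (hδ0 : ∀ n, 0 < δ n) (hδ : HasSum δ ε) (hε : ε < 1 / 2) {a : C₀(ℕ, ℝ)} {w : C₀(ℕ, ℝ)}
    (hw : HasSum (fun n => a n • y n) w) : (1 - 2 * ε) * ‖a‖ ≤ ‖w‖ := by
  suffices h : ∀ n₀, ‖a n₀‖ ≤ ‖w‖ + 2 * ε * ‖a‖ by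
    have hε0 : 0 ≤ ε := hδ.nonneg fun n => (hδ0 n).le
    linarith [norm_le_of_forall_norm_apply_le a (by positivity) h]
  intro n₀
  have hδε : δ n₀ ≤ ε := le_hasSum hδ n₀ fun n _ => (hδ0 n).le
  obtain ⟨i, hi⟩ := exists_lt_norm_apply (y n₀) (r := 1 - δ n₀) (by linarith [hy1 n₀, hδ0 n₀])
  -- `y n₀` is the dominant term at `i`, since it is too large there to be bounded by `δ n₀`.
  have hn₀ : ∀ n ≠ n₀, ‖y n i‖ ≤ δ n := by
    obtain ⟨n₁, hn₁⟩ := hy i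
    rcases eq_or_ne n₁ n₀ with rfl | hne
    · exact hn₁
    · linarith [hn₁ n₀ hne.symm]
  have hrest := norm_apply_sub_le_of_forall_ne (fun n => (hδ0 n).le) hδ
    (norm_apply_le_norm a) hw hn₀
  have hwi := norm_apply_le_norm w i
  have hmain : ‖a n₀‖ * ‖y n₀ i‖ ≤ ‖w i‖ + ‖a‖ * ε := by
    rw [← norm_mul]
    linarith [norm_le_norm_add_norm_sub' (a n₀ * y n₀ i) (w i), norm_sub_rev (w i) (a n₀ * y n₀ i)]
  have hδa : ‖a n₀‖ * δ n₀ ≤ ‖a‖ * ε :=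
    mul_le_mul (norm_apply_le_norm a n₀) hδε (hδ0 n₀).le (norm_nonneg a)
  nlinarith [mul_le_mul_of_nonneg_left hi.le (norm_nonneg (a n₀))]

end AlmostDisjoint

theorem isAlmostDisjoint_of_blocks {y : ℕ → C₀(ℕ, ℝ)} {δ : ℕ → ℝ} {m : ℕ → ℕ} (hm : Monotone m)
    (hδ0 : ∀ n, 0 ≤ δ n) (hlow : ∀ n, ∀ i < m n, y n i = 0)
    (hhigh : ∀ n, ∀ i ≥ m (n + 1), ‖y n i‖ ≤ δ n) : IsAlmostDisjoint y δ := by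
  intro i
  have hsmall : ∀ n, ¬ (m n ≤ i ∧ i < m (n + 1)) → ‖y n i‖ ≤ δ n := fun n hn => by
    rcases lt_or_ge i (m n) with hi | hi
    · simpa [hlow n i hi] using hδ0 n
    · exact hhigh n i (by omega)
  by_cases hblock : ∃ n₀, m n₀ ≤ i ∧ i < m (n₀ + 1)
  · obtain ⟨n₀, hn₀⟩ := hblock
    refine ⟨n₀, fun n hne => hsmall n fun hn => ?_⟩
    rcases lt_or_gt_of_ne hne with h | h
    · have := hm (show n + 1 ≤ n₀ by omega); omega
    · have := hm (show n₀ + 1 ≤ n by omega); omega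
  · exact ⟨0, fun n _ => hsmall n fun hn => hblock ⟨n, hn⟩⟩

end ZeroAtInftyContinuousMap

section Construction

open ZeroAtInftyContinuousMap

variable {X : Type*} [NormedAddCommGroup X] [NormedSpace ℝ X] (T : X →L[ℝ] C₀(ℕ, ℝ))
  {M : Submodule ℝ X}

theorem exists_mem_norm_map_eq_one_apply_eq_zero_of_lt (hM : ¬ FiniteDimensional ℝ M)
    (hT : ∀ x ∈ M, T x = 0 → x = 0) (m : ℕ) :
    ∃ x ∈ M, ‖T x‖ = 1 ∧ ∀ i < m, T x i = 0 := by
  obtain ⟨x, hxM, hx0, hxm⟩ := Submodule.exists_mem_ne_zero_forall_eq_zero hM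
    fun j : Fin m => ((evalCLM j).comp T : X →ₗ[ℝ] ℝ)
  have hTx : T x ≠ 0 := fun h => hx0 (hT x hxM h)
  refine ⟨‖T x‖⁻¹ • x, M.smul_mem _ hxM, ?_, fun i hi => ?_⟩
  · rw [map_smul]
    exact norm_smul_inv_norm hTx
  · have hxi : T x i = 0 := by simpa using hxm ⟨i, hi⟩
    simp [hxi]

theorem exists_seq_isAlmostDisjoint (hM : ¬ FiniteDimensional ℝ M)
    (hT : ∀ x ∈ M, T x = 0 → x = 0) {δ : ℕ → ℝ} (hδ : ∀ n, 0 < δ n) :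
    ∃ u : ℕ → X, (∀ n, u n ∈ M) ∧ (∀ n, ‖T (u n)‖ = 1) ∧ IsAlmostDisjoint (fun n => T (u n)) δ := by
  choose x hxM hx1 hx0 using exists_mem_norm_map_eq_one_apply_eq_zero_of_lt T hM hT
  have hdecay : ∀ n m, ∃ m' ≥ m, ∀ i ≥ m', ‖T (x m) i‖ ≤ δ n := fun n m => by
    obtain ⟨N, hN⟩ := eventually_atTop.mp
      ((tendsto_atTop_zero (T (x m))).eventually (closedBall_mem_nhds 0 (hδ n)))
    exact ⟨max N m, le_max_right _ _, fun i hi => by simpa using hN i (le_of_max_le_left hi)⟩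
  choose next hnext_ge hnext using hdecay
  -- `x (ms n)` vanishes below `ms n` and is `δ n`-small from `ms (n + 1)` on.
  let ms : ℕ → ℕ := fun n => Nat.rec 0 (fun k acc => next k acc) n
  refine ⟨fun n => x (ms n), fun n => hxM _, fun n => hx1 _,
    isAlmostDisjoint_of_blocks (monotone_nat_of_le_succ fun n => hnext_ge n (ms n))
      (fun n => (hδ n).le) (fun n => hx0 (ms n)) (fun n => hnext n (ms n))⟩

theorem exists_c0_embedding_of_mul_norm_le [CompleteSpace X] (hMc : IsClosed (M : Set X))
    (hM : ¬ FiniteDimensional ℝ M) {d : ℝ} (hd : 0 < d) (hdM : ∀ x ∈ M, d * ‖x‖ ≤ ‖T x‖) {ε : ℝ}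
    (hε0 : 0 < ε) (hε : ε < 1 / 2) :
    ∃ R : C₀(ℕ, ℝ) →L[ℝ] X, ‖R‖ ≤ (1 + ε) / d ∧ ∀ z, (1 - 2 * ε) * ‖z‖ ≤ ‖T (R z)‖ := by
  set δ : ℕ → ℝ := fun n => ε / 2 / 2 ^ n
  have hδ0 : ∀ n, 0 < δ n := fun n => by positivity
  have hδ : HasSum δ ε := hasSum_geometric_two' ε
  have hT : ∀ x ∈ M, T x = 0 → x = 0 := fun x hx h => by
    have hx0 := hdM x hx
    rw [h, norm_zero] at hx0
    exact norm_le_zero_iff.mp (by nlinarith [norm_nonneg x])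
  obtain ⟨u, huM, hu1, hy⟩ := exists_seq_isAlmostDisjoint T hM hT hδ0
  have hy1 : ∀ n, ‖T (u n)‖ ≤ 1 := fun n => (hu1 n).le
  have hsum : ∀ z : C₀(ℕ, ℝ), Summable fun n => z n • u n := fun z =>
    summable_of_summable_map_of_mul_norm_le T hd hdM (fun n => M.smul_mem _ (huM n))
      (by simpa using hy.summable hy1 (fun n => (hδ0 n).le) hδ z)
  have hTR : ∀ z : C₀(ℕ, ℝ), HasSum (fun n => z n • T (u n)) (T (∑' n, z n • u n)) := fun z => by
    simpa using (hsum z).hasSum.mapL T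
  have hRM : ∀ z : C₀(ℕ, ℝ), ∑' n, z n • u n ∈ M := fun z =>
    hMc.mem_of_tendsto (hsum z).hasSum
      (Eventually.of_forall fun s => Submodule.sum_mem M fun n _ => M.smul_mem _ (huM n))
  have hbound : ∀ z : C₀(ℕ, ℝ), ‖∑' n, z n • u n‖ ≤ (1 + ε) / d * ‖z‖ := fun z => by
    have hup := hy.norm_le_of_hasSum hy1 (fun n => (hδ0 n).le) hδ (norm_apply_le_norm z) (hTR z)
    rw [div_mul_eq_mul_div, le_div_iff₀ hd]
    nlinarith [hdM _ (hRM z)]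
  let R : C₀(ℕ, ℝ) →ₗ[ℝ] X :=
    { toFun := fun z => ∑' n, z n • u n
      map_add' := fun z w => by
        simp only [ZeroAtInftyContinuousMap.add_apply, add_smul]
        exact (hsum z).tsum_add (hsum w)
      map_smul' := fun c z => by
        simp only [ZeroAtInftyContinuousMap.smul_apply, smul_eq_mul, mul_smul, RingHom.id_apply]
        exact (hsum z).tsum_const_smul c }
  refine ⟨R.mkContinuous _ hbound, R.mkContinuous_norm_le (by positivity) hbound, fun z => ?_⟩
  exact hy.le_norm_of_hasSum hu1 hδ0 hδ hε (hTR z)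

end Construction

section Comparison

variable {X Y Z : Type*} [NormedAddCommGroup X] [NormedSpace ℝ X] [NormedAddCommGroup Y]
  [NormedSpace ℝ Y] [NormedAddCommGroup Z] [NormedSpace ℝ Z]

theorem SS_nonneg (T : X →L[ℝ] Y) : 0 ≤ SS T :=
  Real.sSup_nonneg (by rintro _ ⟨M, -, -, rfl⟩; exact minModulusOn_nonneg T M)

theorem minModulusOn_le_SS (T : X →L[ℝ] Y) {M : Submodule ℝ X} (hMc : IsClosed (M : Set X))
    (hM : ¬ FiniteDimensional ℝ M) : minModulusOn T M ≤ SS T := by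
  refine le_csSup ⟨‖T‖, ?_⟩ ⟨M, hMc, hM, rfl⟩
  rintro _ ⟨N, -, hN, rfl⟩
  exact minModulusOn_le_opNorm T (Submodule.ne_bot_of_not_finiteDimensional hN)

theorem SSZ_nonneg (T : X →L[ℝ] Y) : 0 ≤ SSZ Z T :=
  Real.sSup_nonneg (by rintro _ ⟨R, c, hc, -, rfl⟩; positivity)

theorem le_opNorm_mul_opNorm_of_mul_norm_le [Nontrivial Z] (T : X →L[ℝ] Y) (R : Z →L[ℝ] X)
    {c : ℝ} (hR : ∀ z, c * ‖z‖ ≤ ‖T (R z)‖) : c ≤ ‖T‖ * ‖R‖ := by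
  obtain ⟨z, hz⟩ := exists_ne (0 : Z)
  refine le_of_mul_le_mul_right ?_ (norm_pos_iff.mpr hz)
  calc c * ‖z‖ ≤ ‖T (R z)‖ := hR z
    _ ≤ ‖T.comp R‖ * ‖z‖ := (T.comp R).le_opNorm z
    _ ≤ ‖T‖ * ‖R‖ * ‖z‖ := by gcongr; exact T.opNorm_comp_le R

theorem div_le_SSZ [Nontrivial Z] (T : X →L[ℝ] Y) (R : Z →L[ℝ] X) {c K : ℝ} (hc : 0 < c)
    (hR : ∀ z, c * ‖z‖ ≤ ‖T (R z)‖) (hK : ‖R‖ ≤ K) : c / K ≤ SSZ Z T := by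
  have hTR := le_opNorm_mul_opNorm_of_mul_norm_le T R hR
  have hR0 : 0 < ‖R‖ := by
    by_contra! h
    nlinarith [(norm_nonneg R).antisymm' h ▸ hTR]
  calc c / K ≤ c / ‖R‖ := div_le_div_of_nonneg_left hc.le hR0 hK
    _ ≤ SSZ Z T := by
      refine le_csSup ⟨‖T‖, ?_⟩ ⟨R, c, hc, hR, rfl⟩
      rintro _ ⟨R', c', -, hR', rfl⟩
      exact div_le_of_le_mul₀ (norm_nonneg _) (norm_nonneg _)
        (le_opNorm_mul_opNorm_of_mul_norm_le T R' hR')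

theorem SSZ_le_SS [CompleteSpace Z] (hZ : ¬ FiniteDimensional ℝ Z) (T : X →L[ℝ] Y) :
    SSZ Z T ≤ SS T := by
  refine Real.sSup_le ?_ (SS_nonneg T)
  rintro _ ⟨R, c, hc, hR, rfl⟩
  have hRanti : AntilipschitzWith ⟨‖T‖ / c, by positivity⟩ R :=
    R.antilipschitz_of_bound fun z => by
      change ‖z‖ ≤ ‖T‖ / c * ‖R z‖
      rw [div_mul_eq_mul_div, le_div_iff₀ hc, mul_comm]
      exact (hR z).trans (T.le_opNorm _)
  have hclosed : IsClosed (LinearMap.range (R : Z →ₗ[ℝ] X) : Set X) := by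
    rw [LinearMap.coe_range]
    exact hRanti.isClosed_range R.uniformContinuous
  have hinf : ¬ FiniteDimensional ℝ (LinearMap.range (R : Z →ₗ[ℝ] X)) := fun h =>
    hZ (Module.Finite.equiv (LinearEquiv.ofInjective (R : Z →ₗ[ℝ] X) hRanti.injective).symm)
  refine le_trans ?_ (minModulusOn_le_SS T hclosed hinf)
  refine le_minModulusOn T (Submodule.ne_bot_of_not_finiteDimensional hinf) ?_
  rintro _ ⟨z, rfl⟩ (hz1 : ‖R z‖ = 1)
  change c / ‖R‖ ≤ ‖T (R z)‖
  have h1 : 1 ≤ ‖R‖ * ‖z‖ := hz1 ▸ R.le_opNorm z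
  have hR0 : 0 < ‖R‖ := by
    by_contra! h
    nlinarith [(norm_nonneg R).antisymm' h ▸ h1]
  rw [div_le_iff₀ hR0]
  nlinarith [mul_le_mul_of_nonneg_left h1 hc.le, mul_le_mul_of_nonneg_left (hR z) hR0.le]

theorem SS_le_SSZ_c0 [CompleteSpace X] (T : X →L[ℝ] C₀(ℕ, ℝ)) : SS T ≤ SSZ C₀(ℕ, ℝ) T := by
  refine Real.sSup_le ?_ (SSZ_nonneg T)
  rintro _ ⟨M, hMc, hM, rfl⟩
  change minModulusOn T M ≤ _
  rcases (minModulusOn_nonneg T M).eq_or_lt with h0 | hd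
  · exact h0 ▸ SSZ_nonneg T
  set d := minModulusOn T M
  have hdM : ∀ x ∈ M, d * ‖x‖ ≤ ‖T x‖ := fun x hx => minModulusOn_mul_norm_le T hx
  have hlim : Tendsto (fun ε : ℝ => (1 - 2 * ε) / ((1 + ε) / d)) (𝓝[>] 0) (𝓝 d) := by
    have hcont : ContinuousAt (fun ε : ℝ => (1 - 2 * ε) / ((1 + ε) / d)) 0 :=
      (continuousAt_const.sub (continuousAt_const.mul continuousAt_id)).div
        ((continuousAt_const.add continuousAt_id).div_const d) (by simp [hd.ne'])
    simpa using hcont.tendsto.mono_left nhdsWithin_le_nhds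
  refine le_of_tendsto hlim ?_
  filter_upwards [Ioo_mem_nhdsGT (by norm_num : (0 : ℝ) < 1 / 2)] with ε ⟨hε0, hε⟩
  obtain ⟨R, hRnorm, hR⟩ := exists_c0_embedding_of_mul_norm_le T hMc hM hd hdM hε0 hε
  exact div_le_SSZ T R (by linarith) hR hRnorm

end Comparison

theorem stmt2 {X : Type*} [NormedAddCommGroup X] [NormedSpace ℝ X] [CompleteSpace X] (T : X →L[ℝ] ZeroAtInftyContinuousMap ℕ ℝ) :
    SSZ (ZeroAtInftyContinuousMap ℕ ℝ) T = SS T :=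
  (SSZ_le_SS ZeroAtInftyContinuousMap.not_finiteDimensional T).antisymm (SS_le_SSZ_c0 T)
end

section
/- Let X be a Banach space and (x_n) a sequence in B_X that converges weakly to 0, with ‖x_n‖ > ε for all n. Then for every δ > 0 there is a subsequence (x_{k_n}) with ‖x_{k_n} − x_{k_m}‖ ≥ ε − δ for all n ≠ m. -/
open NormedSpace Metric Set Filter
open scoped ENNReal

/-
Choose norming functionals `f n` with `‖f n‖ ≤ 1` and `f n (x n) = ‖x n‖`. Since `x` is weakly null,
for each fixed `m` eventually `f m (x n) < δ`, so a diagonal extraction gives a subsequence with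
`f (k m) (x (k n)) < δ` whenever `m < n`. Then
`‖x (k m) - x (k n)‖ ≥ f (k m) (x (k m) - x (k n)) > ‖x (k m)‖ - δ > ε - δ`.
-/

theorem Filter.extraction_forall_lt_of_eventually {r : ℕ → ℕ → Prop}
    (hr : ∀ m, ∀ᶠ n in atTop, r m n) :
    ∃ k : ℕ → ℕ, StrictMono k ∧ ∀ m n, m < n → r (k m) (k n) := by
  have hfin : ∀ s : Finset ℕ, ∃ n, ∀ m ∈ s, m < n ∧ r m n := fun s =>
    (s.eventually_all.2 fun m _ => (eventually_gt_atTop m).and (hr m)).exists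
  obtain ⟨k, -, hk⟩ := exists_seq_of_forall_finset_exists (fun _ => True)
    (fun m n => m < n ∧ r m n) fun s _ => (hfin s).imp fun _ hn => ⟨trivial, hn⟩
  exact ⟨k, fun m n hmn => (hk m n hmn).1, fun m n hmn => (hk m n hmn).2⟩

theorem stmt4_general {X : Type*} [NormedAddCommGroup X] [NormedSpace ℝ X] (ε : ℝ) (x : ℕ → X)
    (hweak : ∀ f : StrongDual ℝ X, Tendsto (fun n => f (x n)) atTop (nhds 0))
    (hnorm : ∀ n, ε < ‖x n‖) :
    ∀ δ > (0 : ℝ), ∃ k : ℕ → ℕ, StrictMono k ∧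
      ∀ m n : ℕ, m ≠ n → ε - δ ≤ ‖x (k n) - x (k m)‖ := by
  intro δ hδ
  choose f hf_norm hf_apply using fun n => by simpa using exists_dual_vector'' ℝ (x n)
  obtain ⟨k, hk, hsmall⟩ := extraction_forall_lt_of_eventually
    fun m => (hweak (f m)).eventually (gt_mem_nhds hδ)
  have hsep : ∀ m n, m < n → ε - δ ≤ ‖x (k m) - x (k n)‖ := fun m n hmn =>
    calc ε - δ ≤ f (k m) (x (k m)) - f (k m) (x (k n)) := by
          linarith [hnorm (k m), hf_apply (k m), hsmall m n hmn]
      _ = f (k m) (x (k m) - x (k n)) := (map_sub _ _ _).symm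
      _ ≤ ‖f (k m) (x (k m) - x (k n))‖ := Real.le_norm_self _
      _ ≤ 1 * ‖x (k m) - x (k n)‖ := (f (k m)).le_of_opNorm_le (hf_norm (k m)) _
      _ = ‖x (k m) - x (k n)‖ := one_mul _
  refine ⟨k, hk, fun m n hmn => ?_⟩
  rcases hmn.lt_or_gt with h | h
  · rw [norm_sub_rev]; exact hsep m n h
  · exact hsep n m h

theorem stmt4 {X : Type*} [NormedAddCommGroup X] [NormedSpace ℝ X] [CompleteSpace X] (ε : ℝ) (hε : 0 < ε) (x : ℕ → X)
    (hball : ∀ n, ‖x n‖ ≤ 1)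
    (hweak : ∀ f : StrongDual ℝ X, Tendsto (fun n => f (x n)) atTop (nhds 0))
    (hnorm : ∀ n, ε < ‖x n‖) :
    ∀ δ > (0 : ℝ), ∃ k : ℕ → ℕ, StrictMono k ∧
      ∀ m n : ℕ, m ≠ n → ε - δ ≤ ‖x (k n) - x (k m)‖ :=
  stmt4_general ε x hweak hnorm
end

section
/- For any bounded operator T: X → Y between Banach spaces, SS(T) ≤ SCS(T*): if there is an infinite-dimensional closed subspace M of X with ‖Tx‖ ≥ c‖x‖ for all x ∈ M, then c·B_{X*/M^⊥} ⊆ Q_{M^⊥} T*(B_{Y*}), so Q_{M^⊥}T* is surjective and δ(Q_{M^⊥}T*) ≥ c. -/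
open NormedSpace Metric Set Filter
open scoped ENNReal

/-!
If `T` is bounded below by `c` on `M`, a functional `f` on `X` whose class modulo `M^⊥` has norm
at most `c` satisfies `|f x| ≤ ‖T x‖` on `M`. Hence `T x ↦ f x` is a well-defined functional of
norm at most one on `T(M)`, and a Hahn–Banach extension `g` of it to `Y` satisfies
`T* g ≡ f` modulo `M^⊥`. So `Q_{M^⊥} T*` maps the unit ball onto a set containing the `c`-ball: it
is surjective with `δ ≥ c`. Since `X*/M^⊥ ≅ M*` is infinite-dimensional with `M`, the subspace
`M^⊥` competes in the supremum defining `SCS(T*)`, and taking `c = inf_{S_M} ‖T x‖` gives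
`SS(T) ≤ SCS(T*)`.
-/

section

variable {X Y V W : Type*} [NormedAddCommGroup X] [NormedSpace ℝ X]
  [NormedAddCommGroup Y] [NormedSpace ℝ Y]

theorem exists_norm_le_one_apply_eq_of_abs_le (S : X →L[ℝ] Y) (φ : StrongDual ℝ X)
    (hφ : ∀ x, |φ x| ≤ ‖S x‖) : ∃ g : StrongDual ℝ Y, ‖g‖ ≤ 1 ∧ ∀ x, g (S x) = φ x := by
  let S' : X →ₗ[ℝ] Y := S
  have hker : LinearMap.ker S' ≤ LinearMap.ker (φ : X →ₗ[ℝ] ℝ) := fun x hx => by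
    have := hφ x
    simp_all [S']
  let ψ : LinearMap.range S' →ₗ[ℝ] ℝ :=
    (LinearMap.ker S').liftQ φ hker ∘ₗ S'.quotKerEquivRange.symm.toLinearMap
  have hψ : ∀ x, ψ ⟨S' x, LinearMap.mem_range_self S' x⟩ = φ x := fun x => by
    simp only [ψ, LinearMap.comp_apply, LinearEquiv.coe_coe,
      LinearMap.quotKerEquivRange_symm_apply_image]
    rfl
  have hψ_le : ∀ y, ‖ψ y‖ ≤ 1 * ‖y‖ := by
    rintro ⟨_, x, rfl⟩
    rw [one_mul, Real.norm_eq_abs]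
    exact (hψ x).symm ▸ hφ x
  obtain ⟨g, hg, hg_norm⟩ := exists_extension_norm_eq _ (ψ.mkContinuous 1 hψ_le)
  exact ⟨g, hg_norm ▸ LinearMap.mkContinuous_norm_le ψ zero_le_one hψ_le,
    fun x => (hg ⟨S x, LinearMap.mem_range_self S' x⟩).trans (hψ x)⟩

theorem LinearMap.surjective_of_closedBall_subset_range [AddCommGroup V] [Module ℝ V]
    [SeminormedAddCommGroup W] [NormedSpace ℝ W] (L : V →ₗ[ℝ] W) {c : ℝ} (hc : 0 < c)
    (h : ∀ w, ‖w‖ ≤ c → ∃ v, L v = w) : Function.Surjective L :=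
  LinearMap.range_eq_top.1 <| Submodule.eq_top_of_nonempty_interior' _
    ⟨0, mem_interior.2 ⟨ball 0 c, fun w hw => h w (mem_ball_zero_iff.1 hw).le, isOpen_ball,
      mem_ball_self hc⟩⟩

theorem Submodule.exists_norm_mk_ne_zero [NormedAddCommGroup V] [NormedSpace ℝ V]
    {N : Submodule ℝ V} (hN : IsClosed (N : Set V)) (h : ¬ FiniteDimensional ℝ (V ⧸ N)) :
    ∃ w : V ⧸ N, ‖w‖ ≠ 0 := by
  have : IsClosed (N : Set V) := hN
  have : Nontrivial (V ⧸ N) := not_subsingleton_iff_nontrivial.1 fun _ => h Module.Finite.of_finite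
  obtain ⟨w, hw⟩ := exists_ne (0 : V ⧸ N)
  exact ⟨w, norm_ne_zero_iff.2 hw⟩

section deltaQ

variable {E : Type*} [SeminormedAddCommGroup W] [NormedSpace ℝ W] {C : ℝ}

theorem le_of_closedBall_subset_image_closedBall [Norm E] {S : E → W}
    (hS : ∀ x, ‖S x‖ ≤ C * ‖x‖) (hC : 0 ≤ C) (hW : ∃ w : W, ‖w‖ ≠ 0) {d : ℝ} (hd : 0 < d)
    (h : ∀ w : W, ‖w‖ ≤ d → ∃ x, ‖x‖ ≤ 1 ∧ S x = w) : d ≤ C := by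
  obtain ⟨w, hw⟩ := hW
  have hw' : ‖(d / ‖w‖) • w‖ = d := by
    rw [norm_smul, Real.norm_of_nonneg (by positivity), div_mul_cancel₀ _ hw]
  obtain ⟨x, hx, hSx⟩ := h _ hw'.le
  calc d = ‖S x‖ := by rw [hSx, hw']
    _ ≤ C * ‖x‖ := hS x
    _ ≤ C := mul_le_of_le_one_right hC hx

variable [NormedAddCommGroup E] {S : E → W}

theorem deltaQ_le (hS : ∀ x, ‖S x‖ ≤ C * ‖x‖) (hC : 0 ≤ C) (hW : ∃ w : W, ‖w‖ ≠ 0) :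
    deltaQ S ≤ C :=
  Real.sSup_le (fun _ hd => le_of_closedBall_subset_image_closedBall hS hC hW hd.1 hd.2) hC

theorem le_deltaQ (hS : ∀ x, ‖S x‖ ≤ C * ‖x‖) (hC : 0 ≤ C) (hW : ∃ w : W, ‖w‖ ≠ 0)
    {c : ℝ} (hc : 0 < c) (h : ∀ w : W, ‖w‖ ≤ c → ∃ x, ‖x‖ ≤ 1 ∧ S x = w) : c ≤ deltaQ S :=
  le_csSup ⟨C, fun _ hd => le_of_closedBall_subset_image_closedBall hS hC hW hd.1 hd.2⟩ ⟨hc, h⟩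

end deltaQ

section SCS

variable [NormedAddCommGroup V] [NormedSpace ℝ V] [NormedAddCommGroup W] [NormedSpace ℝ W]
  (S : V →L[ℝ] W)

theorem SCS_nonneg : 0 ≤ SCS S :=
  Real.sSup_nonneg fun _ ⟨_, _, _, _, hr⟩ => hr ▸ Real.sSup_nonneg fun _ hd => hd.1.le

theorem deltaQ_mk_le_SCS {N : Submodule ℝ W} (hN : IsClosed (N : Set W))
    (hNfin : ¬ FiniteDimensional ℝ (W ⧸ N))
    (hsurj : Function.Surjective fun v => (Submodule.Quotient.mk (S v) : W ⧸ N)) :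
    deltaQ (fun v => (Submodule.Quotient.mk (S v) : W ⧸ N)) ≤ SCS S := by
  refine le_csSup ⟨‖S‖, ?_⟩ ⟨N, hN, hNfin, hsurj, rfl⟩
  rintro _ ⟨N', hN', hN'fin, -, rfl⟩
  exact deltaQ_le (fun v => (Submodule.Quotient.norm_mk_le _ _).trans (S.le_opNorm v))
    (norm_nonneg _) (Submodule.exists_norm_mk_ne_zero hN' hN'fin)

end SCS

theorem annih_eq_ker (M : Submodule ℝ X) :
    annih M = LinearMap.ker (adjOp M.subtypeL : StrongDual ℝ X →ₗ[ℝ] StrongDual ℝ M) := by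
  ext f
  simp [annih, adjOp, ContinuousLinearMap.ext_iff]

theorem isClosed_annih (M : Submodule ℝ X) : IsClosed (annih M : Set (StrongDual ℝ X)) := by
  rw [annih_eq_ker]
  exact (adjOp M.subtypeL).isClosed_ker

theorem adjOp_subtypeL_surjective (M : Submodule ℝ X) : Function.Surjective (adjOp M.subtypeL) :=
  fun m => (exists_extension_norm_eq M m).imp fun _ hg => ContinuousLinearMap.ext hg.1

theorem not_finiteDimensional_quotient_annih {M : Submodule ℝ X}
    (hM : ¬ FiniteDimensional ℝ M) : ¬ FiniteDimensional ℝ (StrongDual ℝ X ⧸ annih M) := by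
  intro h
  have : FiniteDimensional ℝ (StrongDual ℝ M) :=
    Module.Finite.of_surjective ((annih M).liftQ _ (annih_eq_ker M).le) <| by
      rw [← LinearMap.range_eq_top, Submodule.range_liftQ, LinearMap.range_eq_top]
      exact adjOp_subtypeL_surjective M
  exact hM (.of_injective (inclusionInDoubleDualLi ℝ).toLinearMap
    (inclusionInDoubleDualLi ℝ).injective)

theorem abs_apply_le_norm_mk_annih_mul (M : Submodule ℝ X) (f : StrongDual ℝ X) {x : X}
    (hx : x ∈ M) :
    |f x| ≤ ‖(Submodule.Quotient.mk f : StrongDual ℝ X ⧸ annih M)‖ * ‖x‖ := by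
  let ev := (inclusionInDoubleDual ℝ X x : StrongDual ℝ X →+ ℝ).mkNormedAddGroupHom ‖x‖
    fun g => by simpa [mul_comm] using g.le_opNorm x
  have hev : ∀ g ∈ (annih M).toAddSubgroup, ev g = 0 := fun g hg => hg x hx
  calc |f x| ≤ ‖ev‖ * ‖(Submodule.Quotient.mk f : StrongDual ℝ X ⧸ annih M)‖ :=
        QuotientAddGroup.norm_lift_apply_le ev hev (Submodule.Quotient.mk f)
    _ ≤ ‖x‖ * ‖(Submodule.Quotient.mk f : StrongDual ℝ X ⧸ annih M)‖ := by
        gcongr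
        exact AddMonoidHom.mkNormedAddGroupHom_norm_le _ (norm_nonneg x) _
    _ = _ := mul_comm _ _

theorem exists_norm_le_one_mk_adjOp_eq (T : X →L[ℝ] Y) {M : Submodule ℝ X} {c : ℝ}
    (hTc : ∀ x ∈ M, c * ‖x‖ ≤ ‖T x‖) (φ : StrongDual ℝ X ⧸ annih M) (hφ : ‖φ‖ ≤ c) :
    ∃ g : StrongDual ℝ Y, ‖g‖ ≤ 1 ∧
      (Submodule.Quotient.mk (adjOp T g) : StrongDual ℝ X ⧸ annih M) = φ := by
  obtain ⟨f, rfl⟩ := Submodule.Quotient.mk_surjective (annih M) φ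
  have hfT : ∀ x : M, |f x| ≤ ‖T x‖ := fun x => calc
    |f x| ≤ ‖(Submodule.Quotient.mk f : StrongDual ℝ X ⧸ annih M)‖ * ‖(x : X)‖ :=
      abs_apply_le_norm_mk_annih_mul M f x.2
    _ ≤ c * ‖(x : X)‖ := by gcongr
    _ ≤ ‖T x‖ := hTc x x.2
  obtain ⟨g, hg, hgf⟩ :=
    exists_norm_le_one_apply_eq_of_abs_le (T ∘L M.subtypeL) (f ∘L M.subtypeL) hfT
  refine ⟨g, hg, (Submodule.Quotient.eq _).2 fun x hx => ?_⟩
  simpa [adjOp, sub_eq_zero] using hgf ⟨x, hx⟩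

theorem mul_norm_le_norm_apply_of_le_sInf (T : X →L[ℝ] Y) {M : Submodule ℝ X} {c : ℝ}
    (hc : c ≤ sInf {r : ℝ | ∃ x ∈ M, ‖x‖ = 1 ∧ r = ‖T x‖}) (x : X) (hx : x ∈ M) :
    c * ‖x‖ ≤ ‖T x‖ := by
  rcases eq_or_ne x 0 with rfl | hx0
  · simp
  have hmem : ‖T (‖x‖⁻¹ • x)‖ ∈ {r : ℝ | ∃ x ∈ M, ‖x‖ = 1 ∧ r = ‖T x‖} :=
    ⟨_, M.smul_mem _ hx, norm_smul_inv_norm hx0, rfl⟩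
  have hcx := hc.trans (csInf_le ⟨0, by rintro _ ⟨_, _, _, rfl⟩; exact norm_nonneg _⟩ hmem)
  rw [map_smul, norm_smul, norm_inv, norm_norm, ← div_eq_inv_mul] at hcx
  exact (le_div_iff₀ (norm_pos_iff.2 hx0)).1 hcx

section adjOp

variable (T : X →L[ℝ] Y) {M : Submodule ℝ X} {c : ℝ}

theorem surjective_mk_adjOp (hc : 0 < c) (hTc : ∀ x ∈ M, c * ‖x‖ ≤ ‖T x‖) :
    Function.Surjective
      fun g : StrongDual ℝ Y => (Submodule.Quotient.mk (adjOp T g) : StrongDual ℝ X ⧸ annih M) :=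
  LinearMap.surjective_of_closedBall_subset_range
    ((annih M).mkQ ∘ₗ (adjOp T : StrongDual ℝ Y →ₗ[ℝ] StrongDual ℝ X)) hc
    fun φ hφ => (exists_norm_le_one_mk_adjOp_eq T hTc φ hφ).imp fun _ hg => hg.2

theorem le_deltaQ_mk_adjOp (hM : ¬ FiniteDimensional ℝ M) (hc : 0 < c)
    (hTc : ∀ x ∈ M, c * ‖x‖ ≤ ‖T x‖) :
    c ≤ deltaQ
      fun g : StrongDual ℝ Y => (Submodule.Quotient.mk (adjOp T g) : StrongDual ℝ X ⧸ annih M) :=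
  le_deltaQ (fun g => (Submodule.Quotient.norm_mk_le _ _).trans ((adjOp T).le_opNorm g))
    (norm_nonneg _) (Submodule.exists_norm_mk_ne_zero (isClosed_annih M)
      (not_finiteDimensional_quotient_annih hM)) hc (exists_norm_le_one_mk_adjOp_eq T hTc)

theorem SS_le_SCS_adjOp : SS T ≤ SCS (adjOp T) := by
  refine Real.sSup_le ?_ (SCS_nonneg _)
  rintro c ⟨M, -, hM, rfl⟩
  rcases le_or_gt (sInf {r : ℝ | ∃ x ∈ M, ‖x‖ = 1 ∧ r = ‖T x‖}) 0 with hc | hc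
  · exact hc.trans (SCS_nonneg _)
  have hTc := mul_norm_le_norm_apply_of_le_sInf T (M := M) le_rfl
  exact (le_deltaQ_mk_adjOp T hM hc hTc).trans <| deltaQ_mk_le_SCS _ (isClosed_annih M)
    (not_finiteDimensional_quotient_annih hM) (surjective_mk_adjOp T hc hTc)

end adjOp

end

theorem stmt7_general {X Y : Type*} [NormedAddCommGroup X] [NormedSpace ℝ X]
    [NormedAddCommGroup Y] [NormedSpace ℝ Y] (T : X →L[ℝ] Y) :
    SS T ≤ SCS (adjOp T) ∧
    ∀ (M : Submodule ℝ X), IsClosed (M : Set X) → ¬ FiniteDimensional ℝ M →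
      ∀ c : ℝ, 0 < c → (∀ x ∈ M, c * ‖x‖ ≤ ‖T x‖) →
        (∀ φ : StrongDual ℝ X ⧸ annih M, ‖φ‖ ≤ c → ∃ g : StrongDual ℝ Y, ‖g‖ ≤ 1 ∧
            (Submodule.Quotient.mk (adjOp T g) : StrongDual ℝ X ⧸ annih M) = φ) ∧
        Function.Surjective
          (fun g : StrongDual ℝ Y => (Submodule.Quotient.mk (adjOp T g) : StrongDual ℝ X ⧸ annih M)) ∧
        c ≤ deltaQ
          (fun g : StrongDual ℝ Y => (Submodule.Quotient.mk (adjOp T g) : StrongDual ℝ X ⧸ annih M)) :=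
  ⟨SS_le_SCS_adjOp T, fun _ _ hM _ hc hTc => ⟨exists_norm_le_one_mk_adjOp_eq T hTc,
    surjective_mk_adjOp T hc hTc, le_deltaQ_mk_adjOp T hM hc hTc⟩⟩

theorem stmt7 {X Y : Type*} [NormedAddCommGroup X] [NormedSpace ℝ X] [CompleteSpace X]
    [NormedAddCommGroup Y] [NormedSpace ℝ Y] [CompleteSpace Y] (T : X →L[ℝ] Y) :
    SS T ≤ SCS (adjOp T) ∧
    ∀ (M : Submodule ℝ X), IsClosed (M : Set X) → ¬ FiniteDimensional ℝ M →
      ∀ c : ℝ, 0 < c → (∀ x ∈ M, c * ‖x‖ ≤ ‖T x‖) →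
        (∀ φ : StrongDual ℝ X ⧸ annih M, ‖φ‖ ≤ c → ∃ g : StrongDual ℝ Y, ‖g‖ ≤ 1 ∧
            (Submodule.Quotient.mk (adjOp T g) : StrongDual ℝ X ⧸ annih M) = φ) ∧
        Function.Surjective
          (fun g : StrongDual ℝ Y => (Submodule.Quotient.mk (adjOp T g) : StrongDual ℝ X ⧸ annih M)) ∧
        c ≤ deltaQ
          (fun g : StrongDual ℝ Y => (Submodule.Quotient.mk (adjOp T g) : StrongDual ℝ X ⧸ annih M)) :=
  stmt7_general T
end

section
/- Let X be a closed subspace of a Banach space Y and A a bounded subset of X. Then wk_Y(A) ≤ wk_X(A) ≤ 2·wk_Y(A), where wk_Z(A) = d̂(closure of A in (Z**, weak*), Z) with d̂(B,C) = sup_{b∈B} d(b,C). -/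
open NormedSpace Metric Set Filter
open scoped ENNReal

/-!
The bi-adjoint `ι**` of the inclusion `ι : M → Y` is a weak-* continuous isometry `M** → Y**`
with `ι** ∘ J_M = J_Y ∘ ι`; by Banach–Alaoglu it maps the weak-* closure of `J_M(A)` onto that
of `J_Y(A)`. As `ι**` maps `J_M(M)` isometrically into `J_Y(Y)`, distances to `J_Y(Y)` are at
most distances to `J_M(M)`: this is `wk_Y(A) ≤ wk_M(A)`. Conversely, a Hahn–Banach functional
vanishing on `M` and realising `d(y, M)` shows `d(y, M) ≤ ‖ι** ψ - J_Y y‖`, so for `m ∈ M` close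
to `y`, `d(ψ, J_M(M)) ≤ ‖ι** ψ - J_Y y‖ + ‖y - m‖` is at most about `2 ‖ι** ψ - J_Y y‖`.
-/

open Bornology

section WeakStarAdjoint

variable {E F : Type*} [NormedAddCommGroup E] [NormedSpace ℝ E]
  [NormedAddCommGroup F] [NormedSpace ℝ F]

noncomputable def weakAdjOp (T : E →L[ℝ] F) : WeakDual ℝ F → WeakDual ℝ E :=
  fun f => StrongDual.toWeakDual (adjOp T (WeakDual.toStrongDual f))

lemma continuous_weakAdjOp (T : E →L[ℝ] F) : Continuous (weakAdjOp T) :=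
  WeakDual.continuous_of_continuous_eval fun x => WeakDual.eval_continuous (T x)

/-- Banach–Alaoglu makes the weak-* closure of a bounded set compact, so its continuous image is
closed. -/
lemma closure_image_weakAdjOp (T : E →L[ℝ] F) {s : Set (WeakDual ℝ F)} (hs : IsBounded s) :
    closure (weakAdjOp T '' s) = weakAdjOp T '' closure s := by
  have hcompact : IsCompact (closure s) :=
    WeakDual.isCompact_of_bounded_of_closed (WeakDual.isBounded_closure hs) isClosed_closure
  refine (closure_minimal (image_mono subset_closure) ?_).antisymm
    (image_closure_subset_closure_image (continuous_weakAdjOp T))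
  exact (hcompact.image (continuous_weakAdjOp T)).isClosed

lemma adjOp_adjOp_inclusionInDoubleDual (T : E →L[ℝ] F) (x : E) :
    adjOp (adjOp T) (inclusionInDoubleDual ℝ E x) = inclusionInDoubleDual ℝ F (T x) := rfl

lemma isBounded_toWeakDual_image_inclusionInDoubleDual {A : Set E} (hA : IsBounded A) :
    IsBounded (StrongDual.toWeakDual '' (inclusionInDoubleDual ℝ E '' A)) := by
  rw [StrongDual.toWeakDual.image_eq_preimage_symm]
  exact (inclusionInDoubleDualLi ℝ (E := E)).lipschitz.isBounded_image hA

lemma closure_toWeakDual_image_inclusionInDoubleDual_image (T : E →L[ℝ] F) {A : Set E}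
    (hA : IsBounded A) :
    closure (StrongDual.toWeakDual '' (inclusionInDoubleDual ℝ F '' (T '' A))) =
      weakAdjOp (adjOp T) ''
        closure (StrongDual.toWeakDual '' (inclusionInDoubleDual ℝ E '' A)) := by
  rw [← closure_image_weakAdjOp _ (isBounded_toWeakDual_image_inclusionInDoubleDual hA)]
  simp only [image_image, ← adjOp_adjOp_inclusionInDoubleDual]
  rfl

end WeakStarAdjoint

section WeakNoncompactness

variable {Z : Type*} [NormedAddCommGroup Z] [NormedSpace ℝ Z]

lemma wkk_nonneg (A : Set Z) : 0 ≤ wkk Z A :=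
  Real.sSup_nonneg (by rintro r ⟨φ, -, rfl⟩; exact infDist_nonneg)

lemma wkk_le {A : Set Z} {c : ℝ} (hc : 0 ≤ c)
    (h : ∀ φ : StrongDual ℝ (StrongDual ℝ Z),
      StrongDual.toWeakDual φ ∈
        closure (StrongDual.toWeakDual '' (inclusionInDoubleDual ℝ Z '' A)) →
        infDist φ (range (inclusionInDoubleDual ℝ Z)) ≤ c) :
    wkk Z A ≤ c :=
  Real.sSup_le (by rintro r ⟨φ, hφ, rfl⟩; exact h φ hφ) hc

lemma infDist_range_inclusionInDoubleDual_le_norm (φ : StrongDual ℝ (StrongDual ℝ Z)) :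
    infDist φ (range (inclusionInDoubleDual ℝ Z)) ≤ ‖φ‖ :=
  (infDist_le_dist_of_mem (mem_range_self 0)).trans_eq (by rw [map_zero]; exact dist_zero_right φ)

lemma le_wkk {A : Set Z} (hA : IsBounded A) {φ : StrongDual ℝ (StrongDual ℝ Z)}
    (hφ : StrongDual.toWeakDual φ ∈
      closure (StrongDual.toWeakDual '' (inclusionInDoubleDual ℝ Z '' A))) :
    infDist φ (range (inclusionInDoubleDual ℝ Z)) ≤ wkk Z A := by
  obtain ⟨C, hC⟩ := isBounded_iff_forall_norm_le.1 <|
    WeakDual.isBounded_toWeakDual_preimage_iff_isBounded.2 <|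
      WeakDual.isBounded_closure (isBounded_toWeakDual_image_inclusionInDoubleDual hA)
  refine le_csSup ⟨C, ?_⟩ ⟨φ, hφ, rfl⟩
  rintro r ⟨ψ, hψ, rfl⟩
  exact (infDist_range_inclusionInDoubleDual_le_norm ψ).trans (hC ψ hψ)

end WeakNoncompactness

/-- `Submodule.normedSpace` at real scalars: the general instance, with its `SMul` and
`IsScalarTower` side goals, is not found behind two `StrongDual`s. -/
noncomputable abbrev Submodule.realNormedSpace {Y : Type*} [NormedAddCommGroup Y]
    [NormedSpace ℝ Y] (M : Submodule ℝ Y) : NormedSpace ℝ M :=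
  M.normedSpace

section Subspace

attribute [local instance] Submodule.realNormedSpace

variable {Y : Type*} [NormedAddCommGroup Y] [NormedSpace ℝ Y] (M : Submodule ℝ Y)

lemma norm_adjOp_subtypeL_apply_le (f : StrongDual ℝ Y) : ‖adjOp M.subtypeL f‖ ≤ ‖f‖ :=
  (f.opNorm_comp_le _).trans <|
    mul_le_of_le_one_right (norm_nonneg f) (Submodule.norm_subtypeL_le M)

lemma exists_adjOp_subtypeL_eq_norm_eq (g : StrongDual ℝ M) :
    ∃ f : StrongDual ℝ Y, adjOp M.subtypeL f = g ∧ ‖f‖ = ‖g‖ :=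
  let ⟨f, hf, hnorm⟩ := exists_extension_norm_eq M g
  ⟨f, ContinuousLinearMap.ext hf, hnorm⟩

lemma isometry_adjOp_adjOp_subtypeL : Isometry (adjOp (adjOp M.subtypeL)) := by
  refine AddMonoidHomClass.isometry_of_norm _ fun ψ => le_antisymm ?_ ?_
  · refine ContinuousLinearMap.opNorm_le_bound _ (norm_nonneg ψ) fun f => ?_
    calc ‖ψ (adjOp M.subtypeL f)‖ ≤ ‖ψ‖ * ‖adjOp M.subtypeL f‖ := ψ.le_opNorm _
      _ ≤ ‖ψ‖ * ‖f‖ := by gcongr; exact norm_adjOp_subtypeL_apply_le M f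
  · refine ContinuousLinearMap.opNorm_le_bound _ (norm_nonneg _) fun g => ?_
    obtain ⟨f, rfl, hf⟩ := exists_adjOp_subtypeL_eq_norm_eq M g
    rw [← hf]
    exact (adjOp (adjOp M.subtypeL) ψ).le_opNorm f

lemma exists_mem_annih_norm_le_one_eq_infDist (y : Y) :
    ∃ f ∈ annih M, ‖f‖ ≤ 1 ∧ f y = infDist y M := by
  obtain ⟨g, hg, hgy⟩ := exists_dual_vector'' ℝ (M.mkQL y)
  refine ⟨g.comp M.mkQL, fun m hm => ?_, ?_, ?_⟩
  · simp [(Submodule.Quotient.mk_eq_zero M).2 hm]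
  · refine ContinuousLinearMap.opNorm_le_bound _ zero_le_one fun z => ?_
    calc ‖g (M.mkQL z)‖ ≤ ‖g‖ * ‖M.mkQL z‖ := g.le_opNorm _
      _ ≤ 1 * ‖z‖ :=
        mul_le_mul hg (Submodule.Quotient.norm_mk_le _ z) (norm_nonneg _) zero_le_one
  · exact hgy.trans (QuotientAddGroup.norm_mk (S := M.toAddSubgroup) y)

lemma adjOp_subtypeL_eq_zero {f : StrongDual ℝ Y} (hf : f ∈ annih M) : adjOp M.subtypeL f = 0 :=
  ContinuousLinearMap.ext fun m => hf m m.2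

lemma infDist_le_dist_adjOp_adjOp_subtypeL (ψ : StrongDual ℝ (StrongDual ℝ M)) (y : Y) :
    infDist y M ≤ dist (adjOp (adjOp M.subtypeL) ψ) (inclusionInDoubleDual ℝ Y y) := by
  obtain ⟨f, hfM, hf, hfy⟩ := exists_mem_annih_norm_le_one_eq_infDist M y
  set φ := adjOp (adjOp M.subtypeL) ψ
  have hφf : φ f = 0 := by
    change ψ (adjOp M.subtypeL f) = 0
    rw [adjOp_subtypeL_eq_zero M hfM, map_zero]
  calc infDist y M = (inclusionInDoubleDual ℝ Y y - φ) f := by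
        rw [sub_apply, hφf, sub_zero, ← hfy]; rfl
    _ ≤ ‖inclusionInDoubleDual ℝ Y y - φ‖ * ‖f‖ :=
        (le_abs_self _).trans ((inclusionInDoubleDual ℝ Y y - φ).le_opNorm f)
    _ ≤ ‖inclusionInDoubleDual ℝ Y y - φ‖ :=
        mul_le_of_le_one_right (norm_nonneg (inclusionInDoubleDual ℝ Y y - φ)) hf
    _ = dist φ (inclusionInDoubleDual ℝ Y y) := (dist_eq_norm' φ _).symm

lemma infDist_adjOp_adjOp_subtypeL_le (ψ : StrongDual ℝ (StrongDual ℝ M)) :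
    infDist (adjOp (adjOp M.subtypeL) ψ) (range (inclusionInDoubleDual ℝ Y)) ≤
      infDist ψ (range (inclusionInDoubleDual ℝ M)) := by
  have hsub : adjOp (adjOp M.subtypeL) '' range (inclusionInDoubleDual ℝ M) ⊆
      range (inclusionInDoubleDual ℝ Y) := by
    rintro _ ⟨_, ⟨m, rfl⟩, rfl⟩
    exact ⟨m, (adjOp_adjOp_inclusionInDoubleDual M.subtypeL m).symm⟩
  calc _ ≤ infDist (adjOp (adjOp M.subtypeL) ψ)
        (adjOp (adjOp M.subtypeL) '' range (inclusionInDoubleDual ℝ M)) :=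
        infDist_le_infDist_of_subset hsub ((range_nonempty _).image _)
    _ = _ := infDist_image (isometry_adjOp_adjOp_subtypeL M)

lemma infDist_le_two_mul_infDist_adjOp_adjOp_subtypeL (ψ : StrongDual ℝ (StrongDual ℝ M)) :
    infDist ψ (range (inclusionInDoubleDual ℝ M)) ≤
      2 * infDist (adjOp (adjOp M.subtypeL) ψ) (range (inclusionInDoubleDual ℝ Y)) := by
  set φ := adjOp (adjOp M.subtypeL) ψ
  set d := infDist ψ (range (inclusionInDoubleDual ℝ M))
  have hd : ∀ y : Y, d ≤ dist φ (inclusionInDoubleDual ℝ Y y) + infDist y M := by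
    intro y
    suffices d - dist φ (inclusionInDoubleDual ℝ Y y) ≤ infDist y M by linarith
    refine (le_infDist ⟨0, M.zero_mem⟩).2 fun m hm => sub_le_iff_le_add'.2 ?_
    have hJ : dist (inclusionInDoubleDual ℝ Y y) (inclusionInDoubleDual ℝ Y m) = dist y m :=
      (inclusionInDoubleDualLi ℝ (E := Y)).isometry.dist_eq y m
    calc d ≤ dist ψ (inclusionInDoubleDual ℝ M ⟨m, hm⟩) :=
          infDist_le_dist_of_mem (mem_range_self _)
      _ = dist φ (inclusionInDoubleDual ℝ Y m) :=
        ((isometry_adjOp_adjOp_subtypeL M).dist_eq _ _).symm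
      _ ≤ dist φ (inclusionInDoubleDual ℝ Y y) + dist y m := hJ ▸ dist_triangle _ _ _
  rw [← div_le_iff₀' two_pos, le_infDist (range_nonempty _)]
  rintro _ ⟨y, rfl⟩
  linarith [hd y, infDist_le_dist_adjOp_adjOp_subtypeL M ψ y]

end Subspace

theorem stmt12_general {Y : Type*} [NormedAddCommGroup Y] [NormedSpace ℝ Y]
    (M : Submodule ℝ Y) (A : Set M)
    (hA : Bornology.IsBounded A) :
    wkk Y (Subtype.val '' A) ≤ wkk M A ∧ wkk M A ≤ 2 * wkk Y (Subtype.val '' A) := by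
  have hAY : IsBounded (Subtype.val '' A) := M.subtypeL.lipschitz.isBounded_image hA
  have hclosure :
      closure (StrongDual.toWeakDual '' (inclusionInDoubleDual ℝ Y '' (Subtype.val '' A))) =
        weakAdjOp (adjOp M.subtypeL) ''
          closure (StrongDual.toWeakDual '' (inclusionInDoubleDual ℝ M '' A)) :=
    closure_toWeakDual_image_inclusionInDoubleDual_image M.subtypeL hA
  constructor
  · refine wkk_le (wkk_nonneg A) fun φ hφ => ?_
    obtain ⟨χ, hχ, hχφ⟩ := hclosure ▸ hφ
    obtain rfl : adjOp (adjOp M.subtypeL) (WeakDual.toStrongDual χ) = φ :=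
      StrongDual.toWeakDual.injective hχφ
    exact (infDist_adjOp_adjOp_subtypeL_le M _).trans (le_wkk hA hχ)
  · refine wkk_le (mul_nonneg zero_le_two (wkk_nonneg _)) fun ψ hψ => ?_
    have hφ := hclosure ▸ mem_image_of_mem (weakAdjOp (adjOp M.subtypeL)) hψ
    calc _ ≤ 2 * infDist (adjOp (adjOp M.subtypeL) ψ) (range (inclusionInDoubleDual ℝ Y)) :=
          infDist_le_two_mul_infDist_adjOp_adjOp_subtypeL M ψ
      _ ≤ 2 * wkk Y (Subtype.val '' A) := by gcongr; exact le_wkk hAY hφ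

theorem stmt12 {Y : Type*} [NormedAddCommGroup Y] [NormedSpace ℝ Y] [CompleteSpace Y]
    (M : Submodule ℝ Y) (hM : IsClosed (M : Set Y)) (A : Set M)
    (hA : Bornology.IsBounded A) :
    wkk Y (Subtype.val '' A) ≤ wkk M A ∧ wkk M A ≤ 2 * wkk Y (Subtype.val '' A) :=
  stmt12_general M A hA
end
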